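/- arXiv:math/0601681 — 5 statements merged into one kernel-verified Lean document; each statement's English description precedes it below -/
import Mathlib

section
/- Let n ≥ 1, let h : {1,…,n} → {0,1,…,n} be a nondecreasing function, let u be an invertible upper-triangular n×n complex matrix, and let P(σ) be the permutation matrix of a permutation σ of {1,…,n}. Then (u·P(σ))⁻¹·E_{1n}·(u·P(σ)) ∈ H_h if and only if P(σ)⁻¹·E_{1n}·P(σ) ∈ H_h. -/
open Matrix

noncomputable section

/-- The length of a permutation: its number of inversions. -/
def invLen {n : ℕ} (w : Equiv.Perm (Fin n)) : ℕ :=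
  (Finset.univ.filter (fun p : Fin n × Fin n => p.1 < p.2 ∧ w p.2 < w p.1)).card

def IsTransposition {n : ℕ} (t : Equiv.Perm (Fin n)) : Prop :=
  ∃ a b : Fin n, a ≠ b ∧ t = Equiv.swap a b

/-- `BruhatCovers w v` means `w` covers `v` in the Bruhat order:
`v = w·t` for some transposition `t` and `ℓ(v) = ℓ(w) − 1`. -/
def BruhatCovers {n : ℕ} (w v : Equiv.Perm (Fin n)) : Prop :=
  (∃ t, IsTransposition t ∧ v = w * t) ∧ invLen v + 1 = invLen w

/-- The Bruhat order: reflexive–transitive closure of the covering relation. -/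
def BruhatLE {n : ℕ} (v w : Equiv.Perm (Fin n)) : Prop :=
  Relation.ReflTransGen (fun x y => BruhatCovers y x) v w

def BruhatLT {n : ℕ} (v w : Equiv.Perm (Fin n)) : Prop :=
  BruhatLE v w ∧ v ≠ w

/-- The matrix unit `E_{kl}`. -/
def stdE (n : ℕ) (k l : Fin n) : Matrix (Fin n) (Fin n) ℂ := Matrix.single k l 1

/-- The permutation matrix of `σ`: entry `(k,l)` is `1` iff `k = σ(l)`. -/
def permMat {n : ℕ} (σ : Equiv.Perm (Fin n)) : Matrix (Fin n) (Fin n) ℂ :=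
  Matrix.of fun k l => if k = σ l then 1 else 0

/-- The Hessenberg space of a (1-based) Hessenberg function `h`:
matrices `M` with `M_{kl} = 0` whenever `k > h(l)`.  Row index `k : Fin n`
corresponds to the 1-based row `(k : ℕ) + 1`. -/
def HessSpace {n : ℕ} (h : Fin n → ℕ) : Set (Matrix (Fin n) (Fin n) ℂ) :=
  {M | ∀ k l : Fin n, h l < (k : ℕ) + 1 → M k l = 0}

/-- The span `H_{ij}` of the matrix units `E_{kl}` with `k ≤ i` and `l ≥ j`
(`i`, `j`, `k`, `l` all 1-based): matrices vanishing outside the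
upper-right `i × (n−j+1)` rectangle. -/
def Hrect (n i j : ℕ) : Set (Matrix (Fin n) (Fin n) ℂ) :=
  {M | ∀ k l : Fin n, ¬((k : ℕ) + 1 ≤ i ∧ j ≤ (l : ℕ) + 1) → M k l = 0}

/-!
The matrix unit `E_{1n}` sits in the top-right corner. For upper-triangular `A` and `B` the
entry `(A E_{1n} B)_{kl} = A_{k1} B_{nl}` vanishes unless `k = 1` and `l = n`, so
`u⁻¹ E_{1n} u` is the nonzero multiple `(u⁻¹)_{11} u_{nn} E_{1n}` of `E_{1n}`. Conjugating
further by `P(σ)` keeps the scalar in front, and `H_h`, being a subspace, does not see it.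
-/

namespace Matrix

section Corner

variable {m R : Type*} [Fintype m] [LinearOrder m]

theorem IsUpperTriangular.mul_single_mul_of_isBot_of_isTop [CommSemiring R]
    {A B : Matrix m m R} (hA : A.IsUpperTriangular) (hB : B.IsUpperTriangular)
    {i j : m} (hi : IsBot i) (hj : IsTop j) (c : R) :
    A * single i j c * B = (A i i * B j j) • single i j c := by
  ext k l
  have hentry : (A * single i j c * B) k l = A k i * c * B j l := by
    rw [mul_apply, Finset.sum_eq_single j (fun x _ hx => by simp [hx]) (by simp)]
    simp
  rw [hentry, smul_apply, smul_eq_mul]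
  by_cases hk : k = i
  · by_cases hl : l = j
    · subst hk hl
      simp only [single_apply_same]
      ring
    · simp [hB ((hj l).lt_of_ne hl), Ne.symm hl]
  · simp [hA ((hi k).lt_of_ne' hk), Ne.symm hk]

theorem IsUpperTriangular.isUnit_diag [CommRing R] {A : Matrix m m R}
    (hA : A.IsUpperTriangular) (hdet : IsUnit A.det) (i : m) : IsUnit (A i i) := by
  rw [det_of_isUpperTriangular hA, ← Finset.mul_prod_erase _ _ (Finset.mem_univ i)] at hdet
  exact isUnit_of_mul_isUnit_left hdet

theorem IsUpperTriangular.nonsing_inv [CommRing R] {A : Matrix m m R}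
    (hA : A.IsUpperTriangular) (hdet : IsUnit A.det) : A⁻¹.IsUpperTriangular :=
  have := A.invertibleOfIsUnitDet hdet
  blockTriangular_inv_of_blockTriangular hA

end Corner

end Matrix

theorem smul_mem_hessSpace_iff {n : ℕ} {h : Fin n → ℕ} {c : ℂ} (hc : c ≠ 0)
    {M : Matrix (Fin n) (Fin n) ℂ} : c • M ∈ HessSpace h ↔ M ∈ HessSpace h := by
  simp [HessSpace, hc]

/-- for a nondecreasing `h : {1,…,n} → {0,…,n}`, an invertible
upper-triangular `u` and a permutation `σ`,
`(u·P(σ))⁻¹·E_{1n}·(u·P(σ)) ∈ H_h ↔ P(σ)⁻¹·E_{1n}·P(σ) ∈ H_h`. -/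
theorem stmt3 (n : ℕ) (hn : 1 ≤ n) (h : Fin n → ℕ)
    (u : Matrix (Fin n) (Fin n) ℂ) (hu : IsUnit u)
    (htri : ∀ k l : Fin n, l < k → u k l = 0) (σ : Equiv.Perm (Fin n)) :
    (u * permMat σ)⁻¹ * stdE n ⟨0, by omega⟩ ⟨n - 1, by omega⟩ * (u * permMat σ)
        ∈ HessSpace h ↔
      (permMat σ)⁻¹ * stdE n ⟨0, by omega⟩ ⟨n - 1, by omega⟩ * permMat σ ∈ HessSpace h := by
  have hupper : u.IsUpperTriangular := htri
  have hdet : IsUnit u.det := (isUnit_iff_isUnit_det u).mp hu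
  have hbot : IsBot (⟨0, by omega⟩ : Fin n) := fun k => Fin.mk_le_mk.mpr k.val.zero_le
  have htop : IsTop (⟨n - 1, by omega⟩ : Fin n) := fun k => Fin.mk_le_mk.mpr (by omega)
  have hcorner := (hupper.nonsing_inv hdet).mul_single_mul_of_isBot_of_isTop hupper hbot htop 1
  have hconj : (u * permMat σ)⁻¹ * stdE n ⟨0, by omega⟩ ⟨n - 1, by omega⟩ * (u * permMat σ) =
      (u⁻¹ ⟨0, by omega⟩ ⟨0, by omega⟩ * u ⟨n - 1, by omega⟩ ⟨n - 1, by omega⟩) •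
        ((permMat σ)⁻¹ * stdE n ⟨0, by omega⟩ ⟨n - 1, by omega⟩ * permMat σ) := by
    rw [Matrix.mul_inv_rev, ← Matrix.smul_mul, ← Matrix.mul_smul, stdE, ← hcorner]
    simp only [mul_assoc]
  rw [hconj, smul_mem_hessSpace_iff (mul_ne_zero
    ((hupper.nonsing_inv hdet).isUnit_diag (isUnit_nonsing_inv_det u hdet) _).ne_zero
    (hupper.isUnit_diag hdet _).ne_zero)]
end
end

section
/- Let n ≥ 2 and fix i ≠ j with 1 ≤ i, j ≤ n. Let w be the permutation of {1,…,n} with w(i) = 1, w(j) = n, and whose values at the remaining positions, read in increasing order of position, are n−1, n−2, …, 2 in decreasing order. Then for every permutation s of {1,…,n}: s ≤ w in the Bruhat order if and only if s⁻¹(1) ≤ i and s⁻¹(n) ≥ j. -/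
open Matrix

noncomputable section

/-!
If `y` covers `x = y * swap a b` with `a < b`, then `y b < y a`, because swapping an ascent
strictly increases the number of inversions. Hence along a chain of covers the position of the
value `0` only moves left and that of `n - 1` only moves right, which gives necessity.

Conversely, suppose `s⁻¹ 0 ≤ i`, `j ≤ s⁻¹ (n - 1)` and `s ≠ w`. If `0` or `n - 1` is not yet in
its place, swapping it with the entry at position `i`, resp. `j`, is an ascent that preserves both
conditions; otherwise `s` has an ascent away from positions `i`, `j`, since `w` is the only
permutation decreasing there. Shrinking such an ascent `a < b` until no `c ∈ (a, b)` has
`s a < s c < s b` keeps these properties and makes `s * swap a b` cover `s`; as the number of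
inversions grows along the way, one climbs to `w`.
-/

open Equiv Finset

variable {n : ℕ}

namespace Equiv.Perm

def inversions (y : Perm (Fin n)) : Finset (Fin n × Fin n) :=
  univ.filter fun P => P.1 < P.2 ∧ y P.2 < y P.1

theorem invLen_eq_card_inversions (y : Perm (Fin n)) : invLen y = #y.inversions := rfl

@[simp]
theorem mem_inversions {y : Perm (Fin n)} {P : Fin n × Fin n} :
    P ∈ y.inversions ↔ P.1 < P.2 ∧ y P.2 < y P.1 := by
  simp [inversions]

theorem invLen_le (y : Perm (Fin n)) : invLen y ≤ n * n :=
  (card_filter_le _ _).trans_eq (by simp)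

theorem inv_mul_swap_apply {α : Type*} [DecidableEq α] (y : Perm α) (a b v : α) :
    (y * swap a b)⁻¹ v = swap a b (y⁻¹ v) := by
  rw [_root_.mul_inv_rev, swap_inv]
  rfl

theorem eq_one_of_strictMono {α : Type*} [LinearOrder α] [WellFoundedLT α] {π : Perm α}
    (h : StrictMono π) : π = 1 :=
  DFunLike.coe_injective <| (h.range_inj strictMono_id).1 (by simp)

end Equiv.Perm

open Equiv.Perm

section Inversions

variable {a b : Fin n}

def swapPair (a b : Fin n) (P : Fin n × Fin n) : Fin n × Fin n :=
  if swap a b P.1 < swap a b P.2 then (swap a b P.1, swap a b P.2) else P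

theorem eq_or_eq_of_swap_lt_swap {p q : Fin n} (hab : a < b) (hpq : p < q)
    (hne : (p, q) ≠ (a, b)) (hrev : swap a b q < swap a b p) :
    (p = a ∧ a < q ∧ q < b) ∨ (q = b ∧ a < p ∧ p < b) := by
  simp only [swap_apply_def] at hrev
  split_ifs at hrev <;> simp only [ne_eq, Prod.mk.injEq, Fin.ext_iff, Fin.lt_def] at * <;> omega

theorem swapPair_injOn (hab : a < b) :
    Set.InjOn (swapPair a b) {P | P.1 < P.2 ∧ P ≠ (a, b)} := by
  rintro ⟨p, q⟩ ⟨hpq, hP⟩ ⟨p', q'⟩ ⟨hpq', hQ⟩ h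
  simp only [ne_eq, Prod.mk.injEq, not_and] at hP hQ
  simp only [swapPair, swap_apply_def] at h
  split_ifs at h <;> simp only [Prod.mk.injEq, Fin.ext_iff, Fin.lt_def] at * <;> omega

/-- Besides `(a, b)`, the pairs whose order `swap a b` reverses are `(a, c)` and `(c, b)` with
`a < c < b`; `swapPair` fixes them, and `hmid` is what keeps them inversions. -/
theorem mapsTo_swapPair (y : Perm (Fin n)) (hab : a < b)
    (hmid : ∀ c, a < c → c < b → (y c < y a → y c < y b) ∧ (y b < y c → y a < y c)) :
    Set.MapsTo (swapPair a b) (y.inversions.erase (a, b))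
      ((y * swap a b).inversions.erase (a, b)) := by
  rintro ⟨p, q⟩ hP
  simp only [coe_erase, Set.mem_sdiff, mem_coe, mem_inversions, Set.mem_singleton_iff] at hP
  obtain ⟨⟨hpq, hy⟩, hne⟩ := hP
  simp only [coe_erase, Set.mem_sdiff, mem_coe, mem_inversions, Set.mem_singleton_iff,
    Perm.mul_apply]
  unfold swapPair
  split_ifs with h
  · refine ⟨⟨h, by simpa using hy⟩, ?_⟩
    simp only [Prod.mk.injEq, swap_apply_eq_iff, swap_apply_left, swap_apply_right]
    rintro ⟨rfl, rfl⟩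
    exact lt_asymm hab hpq
  · refine ⟨⟨hpq, ?_⟩, hne⟩
    have hrev : swap a b q < swap a b p :=
      (not_lt.1 h).lt_of_ne fun h' => hpq.ne ((swap a b).injective h').symm
    rcases eq_or_eq_of_swap_lt_swap hab hpq hne hrev with ⟨rfl, hpq', hqb⟩ | ⟨rfl, hap, hpb⟩
    · rw [swap_apply_left, swap_apply_of_ne_of_ne hpq'.ne' hqb.ne]
      exact (hmid q hpq' hqb).1 hy
    · rw [swap_apply_right, swap_apply_of_ne_of_ne hap.ne' hpb.ne]
      exact (hmid p hap hpb).2 hy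

theorem card_inversions_erase_le (y : Perm (Fin n)) (hab : a < b)
    (hmid : ∀ c, a < c → c < b → (y c < y a → y c < y b) ∧ (y b < y c → y a < y c)) :
    #(y.inversions.erase (a, b)) ≤ #((y * swap a b).inversions.erase (a, b)) :=
  card_le_card_of_injOn _ (mapsTo_swapPair y hab hmid) fun _ hP _ hQ =>
    swapPair_injOn hab ⟨(mem_inversions.1 (mem_of_mem_erase hP)).1, ne_of_mem_erase hP⟩
      ⟨(mem_inversions.1 (mem_of_mem_erase hQ)).1, ne_of_mem_erase hQ⟩

end Inversions

theorem swap_apply_le_of_ne_left {α : Type*} [LinearOrder α] {a b v : α} (hab : a < b)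
    (hv : v ≠ a) : swap a b v ≤ v := by
  rw [swap_apply_def]
  split_ifs with h₁ h₂
  · exact absurd h₁ hv
  · exact h₂ ▸ hab.le
  · exact le_rfl

theorem le_swap_apply_of_ne_right {α : Type*} [LinearOrder α] {a b v : α} (hab : a < b)
    (hv : v ≠ b) : v ≤ swap a b v := by
  rw [swap_apply_def]
  split_ifs with h₁
  · exact h₁ ▸ hab.le
  · exact le_rfl

section Covers

variable {a b : Fin n} {s x y w : Perm (Fin n)}

theorem invLen_lt_invLen_mul_swap (hab : a < b) (hy : y a < y b) :
    invLen y < invLen (y * swap a b) := by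
  have hle := card_inversions_erase_le y hab fun c _ _ =>
    ⟨fun h => h.trans hy, fun h => hy.trans h⟩
  have hnot : (a, b) ∉ y.inversions := by simp [hy.le]
  have hmem : (a, b) ∈ (y * swap a b).inversions := by simp [hab, hy]
  rw [erase_eq_of_notMem hnot, card_erase_of_mem hmem] at hle
  have := card_pos.2 ⟨_, hmem⟩
  rw [invLen_eq_card_inversions, invLen_eq_card_inversions]
  omega

def IsCoverAscent (s : Perm (Fin n)) (a b : Fin n) : Prop :=
  a < b ∧ s a < s b ∧ ∀ c, a < c → c < b → ¬(s a < s c ∧ s c < s b)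

theorem IsCoverAscent.invLen_mul_swap (h : IsCoverAscent s a b) :
    invLen (s * swap a b) = invLen s + 1 := by
  obtain ⟨hab, hs, hgap⟩ := h
  have hle := card_inversions_erase_le (s * swap a b) hab fun c hac hcb => by
    simp only [Perm.mul_apply, swap_apply_left, swap_apply_right,
      swap_apply_of_ne_of_ne hac.ne' hcb.ne]
    exact ⟨fun h => (not_lt.1 fun h' => hgap c hac hcb ⟨h', h⟩).lt_of_ne (s.injective.ne hac.ne'),
      fun h => (not_lt.1 fun h' => hgap c hac hcb ⟨h, h'⟩).lt_of_ne (s.injective.ne hcb.ne')⟩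
  have hnot : (a, b) ∉ s.inversions := by simp [hs.le]
  have hmem : (a, b) ∈ (s * swap a b).inversions := by simp [hab, hs]
  rw [mul_swap_mul_self, erase_eq_of_notMem hnot, card_erase_of_mem hmem] at hle
  have := invLen_lt_invLen_mul_swap hab hs
  simp only [invLen_eq_card_inversions] at this ⊢
  omega

theorem IsCoverAscent.bruhatCovers (h : IsCoverAscent s a b) : BruhatCovers (s * swap a b) s :=
  ⟨⟨swap a b, ⟨a, b, h.1.ne, rfl⟩, (mul_swap_mul_self a b s).symm⟩, h.invLen_mul_swap.symm⟩

theorem BruhatCovers.exists_lt_of_eq_mul_swap (h : BruhatCovers y x) :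
    ∃ a b, a < b ∧ y b < y a ∧ x = y * swap a b := by
  obtain ⟨⟨_, ⟨a, b, hne, rfl⟩, rfl⟩, hlen⟩ := h
  wlog hab : a < b generalizing a b
  · rw [Equiv.swap_comm] at hlen ⊢
    exact this b a hne.symm hlen ((not_lt.1 hab).lt_of_ne hne.symm)
  refine ⟨a, b, hab, not_le.1 fun hy => ?_, rfl⟩
  have := invLen_lt_invLen_mul_swap hab (hy.lt_of_ne (y.injective.ne hne))
  omega

theorem BruhatCovers.inv_apply_le_of_isBot (h : BruhatCovers y x) {lo : Fin n} (hlo : IsBot lo) :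
    x⁻¹ lo ≤ y⁻¹ lo := by
  obtain ⟨a, b, hab, hy, rfl⟩ := h.exists_lt_of_eq_mul_swap
  rw [inv_mul_swap_apply]
  exact swap_apply_le_of_ne_left hab fun ha =>
    (hlo (y b)).not_gt (by rwa [Perm.inv_eq_iff_eq.1 ha])

theorem BruhatCovers.inv_apply_le_of_isTop (h : BruhatCovers y x) {hi : Fin n} (hhi : IsTop hi) :
    y⁻¹ hi ≤ x⁻¹ hi := by
  obtain ⟨a, b, hab, hy, rfl⟩ := h.exists_lt_of_eq_mul_swap
  rw [inv_mul_swap_apply]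
  exact le_swap_apply_of_ne_right hab fun hb =>
    (hhi (y a)).not_gt (by rwa [Perm.inv_eq_iff_eq.1 hb])

theorem BruhatLE.inv_apply_le_of_isBot (h : BruhatLE s w) {lo : Fin n} (hlo : IsBot lo) :
    s⁻¹ lo ≤ w⁻¹ lo := by
  induction h with
  | refl => rfl
  | tail _ hcov ih => exact ih.trans (BruhatCovers.inv_apply_le_of_isBot hcov hlo)

theorem BruhatLE.inv_apply_le_of_isTop (h : BruhatLE s w) {hi : Fin n} (hhi : IsTop hi) :
    w⁻¹ hi ≤ s⁻¹ hi := by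
  induction h with
  | refl => rfl
  | tail _ hcov ih => exact (BruhatCovers.inv_apply_le_of_isTop hcov hhi).trans ih

end Covers

section Ascents

variable {s w : Perm (Fin n)} {a b I J lo hi : Fin n}

theorem eq_of_strictAntiOn_compl (hlo : IsBot lo) (hhi : IsTop hi) (hsI : s I = lo)
    (hsJ : s J = hi) (hwI : w I = lo) (hwJ : w J = hi) (hs : StrictAntiOn s {I, J}ᶜ)
    (hw : StrictAntiOn w {I, J}ᶜ) : s = w := by
  suffices h : StrictMono ⇑(s * w⁻¹) from mul_inv_eq_one.1 (eq_one_of_strictMono h)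
  intro u v huv
  obtain ⟨x, rfl⟩ := w.surjective u
  obtain ⟨y, rfl⟩ := w.surjective v
  simp only [Perm.mul_apply, Perm.coe_inv, symm_apply_apply]
  have hxy : x ≠ y := fun h => huv.ne (congrArg w h)
  by_cases hxI : x = I
  · subst hxI
    rw [hsI]
    exact (hlo _).lt_of_ne (hsI ▸ s.injective.ne hxy)
  by_cases hyJ : y = J
  · subst hyJ
    rw [hsJ]
    exact (hhi _).lt_of_ne (hsJ ▸ s.injective.ne hxy)
  have hxJ : x ≠ J := by rintro rfl; exact (hhi (w y)).not_gt (hwJ ▸ huv)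
  have hyI : y ≠ I := by rintro rfl; exact (hlo (w x)).not_gt (hwI ▸ huv)
  have hx : x ∈ ({I, J}ᶜ : Set (Fin n)) := by simp [hxI, hxJ]
  have hy : y ∈ ({I, J}ᶜ : Set (Fin n)) := by simp [hyI, hyJ]
  exact (hs.lt_iff_gt hx hy).2 ((hw.lt_iff_gt hx hy).1 huv)

theorem exists_isCoverAscent_of_lt (P : Fin n → Fin n → Prop)
    (hP : ∀ a b c, P a b → a < c → c < b → s a < s c → s c < s b → P a c)
    (hab : a < b) (hs : s a < s b) (h : P a b) : ∃ a b, IsCoverAscent s a b ∧ P a b := by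
  induction b using WellFoundedLT.induction with
  | _ b ih =>
  by_cases hgap : ∀ c, a < c → c < b → ¬(s a < s c ∧ s c < s b)
  · exact ⟨a, b, ⟨hab, hs, hgap⟩, h⟩
  push Not at hgap
  obtain ⟨c, hac, hcb, hsac, hscb⟩ := hgap
  exact ih c hcb hac hsac (hP a b c h hac hcb hsac hscb)

theorem inv_mul_swap_apply_le_of_isBot (hlo : IsBot lo) (hsab : s a < s b) (hs : s⁻¹ lo ≤ I)
    (ha : s⁻¹ lo = a → b ≤ I) : (s * swap a b)⁻¹ lo ≤ I := by
  have hb : s⁻¹ lo ≠ b := fun h => (hlo (s a)).not_gt (by rwa [Perm.inv_eq_iff_eq.1 h])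
  rw [inv_mul_swap_apply]
  rcases eq_or_ne (s⁻¹ lo) a with h | h
  · rw [h, swap_apply_left]
    exact ha h
  · rwa [swap_apply_of_ne_of_ne h hb]

theorem le_inv_mul_swap_apply_of_isTop (hhi : IsTop hi) (hsab : s a < s b) (hs : J ≤ s⁻¹ hi)
    (hb : s⁻¹ hi = b → J ≤ a) : J ≤ (s * swap a b)⁻¹ hi := by
  have ha : s⁻¹ hi ≠ a := fun h => (hhi (s b)).not_gt (by rwa [Perm.inv_eq_iff_eq.1 h])
  rw [inv_mul_swap_apply]
  rcases eq_or_ne (s⁻¹ hi) b with h | h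
  · rw [h, swap_apply_right]
    exact hb h
  · rwa [swap_apply_of_ne_of_ne ha h]

variable (hIJ : I ≠ J) (hlo : IsBot lo) (hhi : IsTop hi) (hwI : w I = lo) (hwJ : w J = hi)
  (hw : StrictAntiOn w {I, J}ᶜ)
include hIJ hlo hhi hwI hwJ hw

theorem exists_ascent_of_ne (hs₁ : s⁻¹ lo ≤ I) (hs₂ : J ≤ s⁻¹ hi) (hsw : s ≠ w) :
    ∃ a b, a < b ∧ s a < s b ∧ (s⁻¹ lo = a → b ≤ I) ∧ (s⁻¹ hi = b → J ≤ a) := by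
  set p := s⁻¹ lo
  set q := s⁻¹ hi
  have hsp : s p = lo := s.apply_symm_apply lo
  have hsq : s q = hi := s.apply_symm_apply hi
  by_cases hpq : p = I ∧ q = J
  · have hs : ¬StrictAntiOn s {I, J}ᶜ := fun hs =>
      hsw (eq_of_strictAntiOn_compl hlo hhi (hpq.1 ▸ hsp) (hpq.2 ▸ hsq) hwI hwJ hs hw)
    simp only [StrictAntiOn, not_forall, not_lt, Set.mem_compl_iff, Set.mem_insert_iff,
      Set.mem_singleton_iff, not_or] at hs
    obtain ⟨a, ⟨haI, -⟩, b, ⟨-, hbJ⟩, hab, hsab⟩ := hs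
    exact ⟨a, b, hab, hsab.lt_of_ne (s.injective.ne hab.ne), fun h => absurd (h ▸ hpq.1) haI,
      fun h => absurd (h ▸ hpq.2) hbJ⟩
  by_cases h : p < I ∧ (q = I → J ≤ p)
  · refine ⟨p, I, h.1, ?_, fun _ => le_rfl, h.2⟩
    rw [hsp]
    exact (hlo _).lt_of_ne (hsp ▸ s.injective.ne h.1.ne)
  have h' : J < q ∧ (p = J → q ≤ I) := by
    simp only [Fin.lt_def, Fin.le_def, Fin.ext_iff] at hs₁ hs₂ hIJ hpq h ⊢
    omega
  refine ⟨J, q, h'.1, ?_, h'.2, fun _ => le_rfl⟩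
  rw [hsq]
  exact (hhi _).lt_of_ne (hsq ▸ s.injective.ne h'.1.ne)

theorem exists_isCoverAscent_of_ne (hs₁ : s⁻¹ lo ≤ I) (hs₂ : J ≤ s⁻¹ hi) (hsw : s ≠ w) :
    ∃ a b, IsCoverAscent s a b ∧ (s * swap a b)⁻¹ lo ≤ I ∧ J ≤ (s * swap a b)⁻¹ hi := by
  obtain ⟨a, b, hab, hsab, h⟩ := exists_ascent_of_ne hIJ hlo hhi hwI hwJ hw hs₁ hs₂ hsw
  obtain ⟨a, b, hcov, ha, hb⟩ :=
    exists_isCoverAscent_of_lt (fun a b => (s⁻¹ lo = a → b ≤ I) ∧ (s⁻¹ hi = b → J ≤ a))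
      (fun a b c h _ hcb _ hscb => ⟨fun ha => hcb.le.trans (h.1 ha),
        fun hc => absurd hscb (by rw [← Perm.inv_eq_iff_eq.1 hc]; exact (hhi _).not_gt)⟩)
      hab hsab h
  exact ⟨a, b, hcov, inv_mul_swap_apply_le_of_isBot hlo hcov.2.1 hs₁ ha,
    le_inv_mul_swap_apply_of_isTop hhi hcov.2.1 hs₂ hb⟩

theorem bruhatLE_of_inv_apply_le (s : Perm (Fin n)) (hs₁ : s⁻¹ lo ≤ I) (hs₂ : J ≤ s⁻¹ hi) :
    BruhatLE s w := by
  by_cases hsw : s = w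
  · exact hsw ▸ Relation.ReflTransGen.refl
  obtain ⟨a, b, hcov, ha, hb⟩ := exists_isCoverAscent_of_ne hIJ hlo hhi hwI hwJ hw hs₁ hs₂ hsw
  exact .head hcov.bruhatCovers (bruhatLE_of_inv_apply_le (s * swap a b) ha hb)
termination_by n * n - invLen s
decreasing_by
  have := hcov.invLen_mul_swap
  have := invLen_le (s * swap a b)
  omega

end Ascents

/-- let `w` be the permutation with `w(i) = 1`, `w(j) = n`,
and remaining values `n−1, …, 2` placed in decreasing order at the remaining
positions (this is expressed by the hypothesis `hdec`).  Then `s ≤ w` in the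
Bruhat order iff `s⁻¹(1) ≤ i` and `s⁻¹(n) ≥ j`.  Everything is 1-based in the
natural-language statement; positions/values in `Fin n` are 0-based. -/
theorem stmt6 (n : ℕ) (i j : ℕ) (hi1 : 1 ≤ i) (hin : i ≤ n)
    (hj1 : 1 ≤ j) (hjn : j ≤ n) (hij : i ≠ j) (w : Equiv.Perm (Fin n))
    (hwi : w ⟨i - 1, by omega⟩ = ⟨0, by omega⟩)
    (hwj : w ⟨j - 1, by omega⟩ = ⟨n - 1, by omega⟩)
    (hdec : ∀ p q : Fin n, p ≠ ⟨i - 1, by omega⟩ → p ≠ ⟨j - 1, by omega⟩ →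
      q ≠ ⟨i - 1, by omega⟩ → q ≠ ⟨j - 1, by omega⟩ → p < q → w q < w p) :
    ∀ s : Equiv.Perm (Fin n), BruhatLE s w ↔
      ((s⁻¹ ⟨0, by omega⟩ : Fin n) : ℕ) + 1 ≤ i ∧
        j ≤ ((s⁻¹ ⟨n - 1, by omega⟩ : Fin n) : ℕ) + 1 := by
  intro s
  have hlo : IsBot (⟨0, by omega⟩ : Fin n) := fun _ => Fin.le_def.2 (Nat.zero_le _)
  have hhi : IsTop (⟨n - 1, by omega⟩ : Fin n) := fun u =>
    Fin.le_def.2 (Nat.le_sub_one_of_lt u.isLt)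
  have hIJ : (⟨i - 1, by omega⟩ : Fin n) ≠ ⟨j - 1, by omega⟩ :=
    Fin.ne_of_val_ne (by dsimp only; omega)
  have hw : StrictAntiOn w {⟨i - 1, by omega⟩, ⟨j - 1, by omega⟩}ᶜ := fun p hp q hq =>
    hdec p q (fun h => hp (.inl h)) (fun h => hp (.inr h)) (fun h => hq (.inl h))
      (fun h => hq (.inr h))
  constructor
  · intro h
    have h₁ := h.inv_apply_le_of_isBot hlo
    have h₂ := h.inv_apply_le_of_isTop hhi
    rw [Perm.inv_eq_iff_eq.2 hwi.symm, Fin.le_def] at h₁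
    rw [Perm.inv_eq_iff_eq.2 hwj.symm, Fin.le_def] at h₂
    dsimp only at h₁ h₂
    omega
  · rintro ⟨h₁, h₂⟩
    exact bruhatLE_of_inv_apply_le hIJ hlo hhi hwi hwj hw s
      (Fin.le_def.2 (by dsimp only; omega)) (Fin.le_def.2 (by dsimp only; omega))
end
end

section
/- Let n ≥ 2 and fix pairs (i,j) and (i′,j′) with 1 ≤ i, j, i′, j′ ≤ n, i ≠ j, and i′ ≠ j′. Let w_{ij} be the permutation of {1,…,n} with w_{ij}(i) = 1, w_{ij}(j) = n, and remaining values n−1, n−2, …, 2 placed in decreasing order at the remaining positions read left to right, and define w_{i′j′} analogously. If neither (i ≤ i′ and j ≥ j′) nor (i′ ≤ i and j′ ≥ j) holds, then w_{ij} and w_{i′j′} are incomparable in the Bruhat order. -/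
open Matrix

noncomputable section

/-! Along a Bruhat covering `w ⋗ w · (a b)` the transposition is applied at a descent
`a < b`, `w b < w a`, because multiplying by a transposition at a non-inversion does not
decrease the length. Such a step can only move the minimal value to the left (it never sits at
`a`) and the maximal value to the right (it never sits at `b`). Hence `v ≤ w` forces
v⁻¹(1) ≤ w⁻¹(1) and w⁻¹(n) ≤ v⁻¹(n), which for `w_{ij} ≤ w_{i'j'}` reads `i ≤ i'` and
`j' ≤ j`. -/

/-- A pair of positions whose order is reversed by `swap a b` is `(a, b)`, or `(a, c)` or `(c, b)`
with `a < c < b`; when `w a < w b`, each such inversion of `w` is still one of `w * swap a b`. -/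
lemma apply_swap_lt_of_not_swap_lt {α : Type*} [LinearOrder α] (w : Equiv.Perm α) {a b p q : α}
    (hab : a < b) (hw : w a < w b) (hpq : p < q) (hinv : w q < w p)
    (hswap : ¬ Equiv.swap a b p < Equiv.swap a b q) :
    w (Equiv.swap a b q) < w (Equiv.swap a b p) := by
  simp only [Equiv.swap_apply_def] at hswap ⊢
  split_ifs at hswap ⊢ <;> grind

lemma invLen_le_invLen_mul_swap {n : ℕ} (w : Equiv.Perm (Fin n)) {a b : Fin n} (hab : a < b)
    (hw : w a < w b) : invLen w ≤ invLen (w * Equiv.swap a b) := by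
  set σ := Equiv.swap a b
  have hσσ (x : Fin n) : σ (σ x) = x := Equiv.swap_apply_self a b x
  refine Finset.card_le_card_of_injOn (fun z => if σ z.1 < σ z.2 then (σ z.1, σ z.2) else z) ?_ ?_
  · rintro ⟨p, q⟩ hpq
    simp only [Finset.coe_filter, Finset.mem_univ, true_and, Set.mem_ofPred_eq] at hpq ⊢
    split_ifs with h
    · simpa [hσσ] using And.intro h hpq.2
    · exact ⟨hpq.1, apply_swap_lt_of_not_swap_lt w hab hw hpq.1 hpq.2 h⟩
  · rintro ⟨p, q⟩ hpq ⟨p', q'⟩ hpq' hz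
    simp only [Finset.coe_filter, Finset.mem_univ, true_and, Set.mem_ofPred_eq] at hpq hpq'
    simp only at hz
    split_ifs at hz with h h' h' <;> simp only [Prod.mk.injEq] at hz ⊢
    · exact ⟨σ.injective hz.1, σ.injective hz.2⟩
    · exact absurd (by rw [← hz.1, ← hz.2, hσσ, hσσ]; exact hpq.1) h'
    · exact absurd (by rw [hz.1, hz.2, hσσ, hσσ]; exact hpq'.1) h
    · exact hz

lemma BruhatCovers.exists_eq_mul_swap {n : ℕ} {w v : Equiv.Perm (Fin n)} (h : BruhatCovers w v) :
    ∃ a b : Fin n, a < b ∧ w b < w a ∧ v = w * Equiv.swap a b := by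
  obtain ⟨⟨t, ⟨a, b, hab, rfl⟩, rfl⟩, hlen⟩ := h
  have descent {a b : Fin n} (hab : a < b) (hlen : invLen (w * Equiv.swap a b) + 1 = invLen w) :
      w b < w a := by
    by_contra! hw
    have := invLen_le_invLen_mul_swap w hab (hw.lt_of_ne (w.injective.ne hab.ne))
    omega
  rcases hab.lt_or_gt with hlt | hlt
  · exact ⟨a, b, hlt, descent hlt hlen, rfl⟩
  · rw [Equiv.swap_comm] at hlen ⊢
    exact ⟨b, a, hlt, descent hlt hlen, rfl⟩

lemma inv_mul_swap_apply {α : Type*} [DecidableEq α] (w : Equiv.Perm α) (a b c : α) :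
    (w * Equiv.swap a b)⁻¹ c = Equiv.swap a b (w⁻¹ c) := by
  simp [_root_.mul_inv_rev]

lemma BruhatCovers.inv_apply_le_of_isBot_s12 {n : ℕ} {w v : Equiv.Perm (Fin n)} (h : BruhatCovers w v)
    {c : Fin n} (hc : IsBot c) : v⁻¹ c ≤ w⁻¹ c := by
  obtain ⟨a, b, hab, hw, rfl⟩ := h.exists_eq_mul_swap
  rw [inv_mul_swap_apply, Equiv.swap_apply_def]
  split_ifs with ha hb
  · rw [Equiv.Perm.inv_eq_iff_eq] at ha
    subst ha
    exact absurd (hc (w b)) hw.not_ge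
  · exact hb ▸ hab.le
  · exact le_rfl

lemma BruhatCovers.inv_apply_le_of_isTop_s12 {n : ℕ} {w v : Equiv.Perm (Fin n)} (h : BruhatCovers w v)
    {d : Fin n} (hd : IsTop d) : w⁻¹ d ≤ v⁻¹ d := by
  obtain ⟨a, b, hab, hw, rfl⟩ := h.exists_eq_mul_swap
  rw [inv_mul_swap_apply, Equiv.swap_apply_def]
  split_ifs with ha hb
  · exact ha ▸ hab.le
  · rw [Equiv.Perm.inv_eq_iff_eq] at hb
    subst hb
    exact absurd (hd (w a)) hw.not_ge
  · exact le_rfl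

lemma BruhatLE.le_of_apply_eq_bot {n : ℕ} {v w : Equiv.Perm (Fin n)} (h : BruhatLE v w)
    {c p q : Fin n} (hc : IsBot c) (hv : v p = c) (hw : w q = c) : p ≤ q := by
  rw [← Equiv.Perm.eq_inv_iff_eq] at hv hw
  subst hv hw
  induction h with
  | refl => exact le_rfl
  | tail _ hcov ih => exact ih.trans (hcov.inv_apply_le_of_isBot_s12 hc)

lemma BruhatLE.le_of_apply_eq_top {n : ℕ} {v w : Equiv.Perm (Fin n)} (h : BruhatLE v w)
    {d p q : Fin n} (hd : IsTop d) (hv : v p = d) (hw : w q = d) : q ≤ p := by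
  rw [← Equiv.Perm.eq_inv_iff_eq] at hv hw
  subst hv hw
  induction h with
  | refl => exact le_rfl
  | tail _ hcov ih => exact (hcov.inv_apply_le_of_isTop_s12 hd).trans ih

/-- with `w_{ij}` (resp. `w_{i′j′}`) the permutation sending `i ↦ 1`,
`j ↦ n` with remaining values `n−1,…,2` in decreasing order, if neither
`(i ≤ i′ ∧ j ≥ j′)` nor `(i′ ≤ i ∧ j′ ≥ j)`, then `w_{ij}` and `w_{i′j′}` are
incomparable in the Bruhat order. -/
theorem stmt12 (n : ℕ) (i j i' j' : ℕ)
    (hi1 : 1 ≤ i) (hin : i ≤ n) (hj1 : 1 ≤ j) (hjn : j ≤ n)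
    (hi'1 : 1 ≤ i') (hi'n : i' ≤ n) (hj'1 : 1 ≤ j') (hj'n : j' ≤ n)
    (w : Equiv.Perm (Fin n))
    (hwi : w ⟨i - 1, by omega⟩ = ⟨0, by omega⟩)
    (hwj : w ⟨j - 1, by omega⟩ = ⟨n - 1, by omega⟩)
    (w' : Equiv.Perm (Fin n))
    (hwi' : w' ⟨i' - 1, by omega⟩ = ⟨0, by omega⟩)
    (hwj' : w' ⟨j' - 1, by omega⟩ = ⟨n - 1, by omega⟩)
    (hnc1 : ¬(i ≤ i' ∧ j' ≤ j)) (hnc2 : ¬(i' ≤ i ∧ j ≤ j')) :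
    ¬ BruhatLE w w' ∧ ¬ BruhatLE w' w := by
  have hbot : IsBot (⟨0, by omega⟩ : Fin n) := fun _ => Nat.zero_le _
  have htop : IsTop (⟨n - 1, by omega⟩ : Fin n) := fun y => Nat.le_sub_one_of_lt y.isLt
  refine ⟨fun h => hnc1 ⟨?_, ?_⟩, fun h => hnc2 ⟨?_, ?_⟩⟩
  · have := Fin.mk_le_mk.mp (h.le_of_apply_eq_bot hbot hwi hwi'); omega
  · have := Fin.mk_le_mk.mp (h.le_of_apply_eq_top htop hwj hwj'); omega
  · have := Fin.mk_le_mk.mp (h.le_of_apply_eq_bot hbot hwi' hwi); omega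
  · have := Fin.mk_le_mk.mp (h.le_of_apply_eq_top htop hwj' hwj); omega
end
end

section
/- Let n ≥ 1 and let X be a nilpotent n×n complex matrix. Fix i with 1 ≤ i ≤ n, and let h : {1,…,n} → {0,1,…,n} be a nondecreasing function with h(i) = i and (if i ≥ 2) h(i−1) ≤ i−1. Define h′ by h′(k) = h(k) for k ≠ i and h′(i) = i−1. Then for every invertible n×n complex matrix g: g⁻¹·X·g ∈ H_h if and only if g⁻¹·X·g ∈ H_{h′}. -/
/-!
Conjugating does not affect nilpotency, so `M = g⁻¹ X g` is nilpotent, and `H_{h'}` is cut out of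
`H_h` by the single extra condition `M_{ii} = 0`. For `M ∈ H_h`, the conditions `h(i) = i` and
`h(i-1) ≤ i-1` make `M` block upper triangular for the partition `{1,…,i-1} ∪ {i} ∪ {i+1,…,n}`,
so the `(i,i)` entry of `M^m` is `M_{ii}^m`; nilpotency of `M` forces `M_{ii} = 0`.
-/

open Matrix

noncomputable section

namespace Matrix

variable {m R α : Type*} [Fintype m] [DecidableEq m] [LinearOrder α] {b : m → α}

theorem BlockTriangular.pow_apply_self_of_singleton_block [Semiring R] {M : Matrix m m R}
    (hM : M.BlockTriangular b) {j : m} (hj : ∀ k, b k = b j → k = j) (e : ℕ) :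
    (M ^ e) j j = M j j ^ e := by
  induction e with
  | zero => simp
  | succ e ih =>
    rw [pow_succ', mul_apply, Finset.sum_eq_single j, ih, pow_succ']
    · intro k _ hkj
      rcases lt_trichotomy (b k) (b j) with hlt | heq | hgt
      · rw [hM hlt, zero_mul]
      · exact absurd (hj k heq) hkj
      · rw [hM.pow e hgt, mul_zero]
    · simp

theorem BlockTriangular.isNilpotent_apply_self_of_singleton_block [Semiring R]
    {M : Matrix m m R} (hM : M.BlockTriangular b) {j : m} (hj : ∀ k, b k = b j → k = j)
    (hnil : IsNilpotent M) : IsNilpotent (M j j) := by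
  obtain ⟨e, he⟩ := hnil
  exact ⟨e, by rw [← hM.pow_apply_self_of_singleton_block hj, he, zero_apply]⟩

theorem isNilpotent_nonsing_inv_mul_mul [CommRing R] (g : Matrix m m R) {X : Matrix m m R}
    (hX : IsNilpotent X) : IsNilpotent (g⁻¹ * X * g) := by
  by_cases hg : IsUnit g
  · obtain ⟨u, rfl⟩ := hg
    obtain ⟨e, he⟩ := hX
    exact ⟨e, by rw [← coe_units_inv, Units.conj_pow', he, mul_zero, zero_mul]⟩
  · rw [nonsing_inv_apply_not_isUnit g (mt (isUnit_iff_isUnit_det g).mpr hg)]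
    simp

end Matrix

section Hessenberg

variable {n : ℕ} {h : Fin n → ℕ} {M : Matrix (Fin n) (Fin n) ℂ}

theorem blockTriangular_of_mem_hessSpace (hM : M ∈ HessSpace h) {j : Fin n}
    (hj : h j = j + 1) (hlt : ∀ k < j, h k ≤ j) :
    M.BlockTriangular (fun k => if k < j then 0 else if k = j then 1 else 2) := by
  intro k l hlk
  simp only at hlk
  apply hM
  rcases lt_trichotomy l j with hl | rfl | hl
  · have hk : ¬k < j := fun hk => by simp [hl, hk] at hlk
    have := hlt l hl
    rw [Fin.lt_def] at hk
    omega
  · have hk : l < k := by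
      by_contra! hk
      rcases hk.lt_or_eq with hk | rfl <;> simp_all
    rw [hj]
    exact Nat.succ_lt_succ hk
  · simp only [hl.not_gt, hl.ne', if_false] at hlk
    split_ifs at hlk <;> omega

theorem apply_self_eq_zero_of_mem_hessSpace (hnil : IsNilpotent M) (hM : M ∈ HessSpace h)
    {j : Fin n} (hj : h j = j + 1) (hlt : ∀ k < j, h k ≤ j) : M j j = 0 := by
  refine ((blockTriangular_of_mem_hessSpace hM hj hlt).isNilpotent_apply_self_of_singleton_block
    ?_ hnil).eq_zero
  intro k hk
  split_ifs at hk <;> simp_all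

theorem mem_hessSpace_lower_iff {h' : Fin n → ℕ} {j : Fin n} (hj : h j = j + 1)
    (hh' : ∀ k, h' k = if k = j then (j : ℕ) else h k) :
    M ∈ HessSpace h' ↔ M ∈ HessSpace h ∧ M j j = 0 := by
  constructor
  · intro hM
    refine ⟨fun k l hkl => hM k l ?_, hM j j (by simp [hh'])⟩
    rw [hh']
    split_ifs with hl
    · subst hl; omega
    · exact hkl
  · rintro ⟨hM, hjj⟩ k l hkl
    rw [hh'] at hkl
    split_ifs at hkl with hl
    · subst hl
      by_cases hk : k = l
      · rwa [hk]
      · exact hM k l (by rw [hj]; omega)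
    · exact hM k l hkl

end Hessenberg

/-- for nilpotent `X`, a nondecreasing `h : {1,…,n} → {0,…,n}` with
`h(i) = i` and (if `i ≥ 2`) `h(i−1) ≤ i−1`, and `h′` obtained from `h` by lowering
the value at `i` to `i−1`: for every invertible `g`,
`g⁻¹·X·g ∈ H_h ↔ g⁻¹·X·g ∈ H_{h′}`. -/
theorem stmt14 (n : ℕ) (X : Matrix (Fin n) (Fin n) ℂ) (hX : IsNilpotent X)
    (i : ℕ) (hi1 : 1 ≤ i) (hin : i ≤ n)
    (h : Fin n → ℕ) (hmono : Monotone h)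
    (hhi : h ⟨i - 1, by omega⟩ = i)
    (hprev : 2 ≤ i → h ⟨i - 2, by omega⟩ ≤ i - 1)
    (h' : Fin n → ℕ)
    (hh' : ∀ k : Fin n, h' k = if k = ⟨i - 1, by omega⟩ then i - 1 else h k)
    (g : Matrix (Fin n) (Fin n) ℂ) :
    g⁻¹ * X * g ∈ HessSpace h ↔ g⁻¹ * X * g ∈ HessSpace h' := by
  set j : Fin n := ⟨i - 1, by omega⟩
  have hjv : (j : ℕ) = i - 1 := rfl
  have hj : h j = j + 1 := by omega
  have hlt : ∀ k < j, h k ≤ j := fun k hk => by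
    rw [Fin.lt_def, hjv] at hk
    exact (hmono (Fin.le_def.mpr (by simp only; omega))).trans (hprev (by omega))
  rw [mem_hessSpace_lower_iff hj hh']
  exact ⟨fun hM => ⟨hM, apply_self_eq_zero_of_mem_hessSpace
    (isNilpotent_nonsing_inv_mul_mul g hX) hM hj hlt⟩, And.left⟩
end
end

section
/- Let n ≥ 2, let X be the n×n complex matrix X = Σ_{k=1}^{n−1} E_{kk} (the diagonal matrix with entries 1,…,1,0), and let h : {1,…,n} → {1,…,n} be given by h(k) = n−1 for k ≤ n−1 and h(n) = n. Then for every invertible n×n complex matrix g, letting V_{n−1} denote the span of the first n−1 columns of g, the following holds: g⁻¹·X·g ∈ H_h if and only if exactly one of the following two conditions holds: (a) e_n ∈ V_{n−1}, or (b) V_{n−1} = span(e_1,…,e_{n−1}). In particular, conditions (a) and (b) are mutually exclusive. -/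
open Matrix

noncomputable section

/-! Let `m` be the last index, so that `X = 1 - E_{mm}` and `g⁻¹ X g = 1 - (g⁻¹ e_m)(e_mᵀ g)`.
The only entries that `H_h` forces to vanish are those of row `m` off the diagonal, which are
`-(g⁻¹)_{mm} g_{ml}`; so `g⁻¹ X g ∈ H_h` iff `(g⁻¹)_{mm} = 0` or row `m` of `g` vanishes off the
diagonal. Now `V_{n-1} = g W` with `W = span(e_l : l ≠ m) = ker e_mᵀ`. The first condition says
`g⁻¹ e_m ∈ W`, i.e. `e_m ∈ V_{n-1}`; the second says `V_{n-1} ≤ W`, i.e. `V_{n-1} = W` since both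
have dimension `n - 1`. As `e_m ∉ W`, the two cannot hold together. -/

section

variable {K ι : Type*} [Fintype ι] [DecidableEq ι]

theorem span_single_one_ne_eq_ker_proj [Semiring K] (m : ι) :
    Submodule.span K {v : ι → K | ∃ l, l ≠ m ∧ v = Pi.single l 1} =
      LinearMap.ker (LinearMap.proj m) := by
  apply le_antisymm
  · rw [Submodule.span_le]
    rintro _ ⟨l, hl, rfl⟩
    simp [hl]
  · intro v hv
    rw [← Finset.univ_sum_single v]
    refine Submodule.sum_mem _ fun l _ => ?_
    by_cases hl : l = m
    · simp_all
    · rw [← mul_one (v l), ← smul_eq_mul, Pi.single_smul]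
      exact Submodule.smul_mem _ _ (Submodule.subset_span ⟨l, hl, rfl⟩)

theorem span_col_eq_map_span_single_one [CommRing K] (g : Matrix ι ι K) (p : ι → Prop) :
    Submodule.span K {v : ι → K | ∃ l, p l ∧ v = fun k => g k l} =
      (Submodule.span K {v : ι → K | ∃ l, p l ∧ v = Pi.single l 1}).map (toLin' g) := by
  rw [Submodule.map_span]
  congr 1
  ext v
  constructor
  · rintro ⟨l, hl, rfl⟩
    exact ⟨Pi.single l 1, ⟨l, hl, rfl⟩, mulVec_single_one g l⟩
  · rintro ⟨_, ⟨l, hl, rfl⟩, rfl⟩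
    exact ⟨l, hl, mulVec_single_one g l⟩

theorem mem_map_toLin'_iff_inv_mulVec_mem [CommRing K] {g : Matrix ι ι K} (hg : IsUnit g)
    (W : Submodule K (ι → K)) (v : ι → K) : v ∈ W.map (toLin' g) ↔ g⁻¹ *ᵥ v ∈ W := by
  have hdet := (isUnit_iff_isUnit_det g).mp hg
  constructor
  · rintro ⟨w, hw, rfl⟩
    simpa [mulVec_mulVec, nonsing_inv_mul g hdet] using hw
  · exact fun hv => ⟨g⁻¹ *ᵥ v, hv, by simp [mulVec_mulVec, mul_nonsing_inv g hdet]⟩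

theorem map_toLin'_eq_self_iff_le [Field K] {g : Matrix ι ι K} (hg : IsUnit g)
    (W : Submodule K (ι → K)) : W.map (toLin' g) = W ↔ W.map (toLin' g) ≤ W := by
  refine ⟨le_of_eq, fun hle => Submodule.eq_of_le_of_finrank_eq hle ?_⟩
  exact (Submodule.equivMapOfInjective _ (mulVec_injective_iff_isUnit.mpr hg) W).finrank_eq.symm

theorem inv_mul_one_sub_single_mul_apply [CommRing K] {g : Matrix ι ι K} (hg : IsUnit g)
    (m k l : ι) : (g⁻¹ * (1 - single m m (1 : K)) * g) k l =
      (1 : Matrix ι ι K) k l - g⁻¹ k m * g m l := by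
  rw [mul_sub, sub_mul, mul_one, nonsing_inv_mul g ((isUnit_iff_isUnit_det g).mp hg)]
  simp [mul_apply, single, ite_and]

theorem inv_mul_one_sub_single_mul_row_eq_zero_iff [Field K] {g : Matrix ι ι K} (hg : IsUnit g)
    (m : ι) : (∀ l, l ≠ m → (g⁻¹ * (1 - single m m (1 : K)) * g) m l = 0) ↔
      g⁻¹ m m = 0 ∨ ∀ l, l ≠ m → g m l = 0 := by
  have hrow (l : ι) (hl : l ≠ m) :
      (g⁻¹ * (1 - single m m (1 : K)) * g) m l = -(g⁻¹ m m * g m l) := by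
    rw [inv_mul_one_sub_single_mul_apply hg, one_apply_ne' hl, zero_sub]
  by_cases hm : g⁻¹ m m = 0 <;> simp +contextual [hrow, hm]

theorem single_one_notMem_span_single_one_ne [Semiring K] [Nontrivial K] (m : ι) :
    (Pi.single m 1 : ι → K) ∉ Submodule.span K {v : ι → K | ∃ l, l ≠ m ∧ v = Pi.single l 1} := by
  simp [span_single_one_ne_eq_ker_proj]

theorem single_one_mem_span_col_ne_iff [CommRing K] {g : Matrix ι ι K} (hg : IsUnit g) (m : ι) :
    Pi.single m 1 ∈ Submodule.span K {v : ι → K | ∃ l, l ≠ m ∧ v = fun k => g k l} ↔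
      g⁻¹ m m = 0 := by
  rw [span_col_eq_map_span_single_one, mem_map_toLin'_iff_inv_mulVec_mem hg,
    span_single_one_ne_eq_ker_proj]
  simp

theorem span_col_ne_eq_span_single_one_ne_iff [Field K] {g : Matrix ι ι K} (hg : IsUnit g)
    (m : ι) :
    Submodule.span K {v : ι → K | ∃ l, l ≠ m ∧ v = fun k => g k l} =
        Submodule.span K {v : ι → K | ∃ l, l ≠ m ∧ v = Pi.single l 1} ↔
      ∀ l, l ≠ m → g m l = 0 := by
  rw [span_col_eq_map_span_single_one, map_toLin'_eq_self_iff_le hg,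
    ← span_col_eq_map_span_single_one, Submodule.span_le, span_single_one_ne_eq_ker_proj]
  refine ⟨fun H l hl => H ⟨l, hl, rfl⟩, ?_⟩
  rintro H _ ⟨l, hl, rfl⟩
  exact H l hl

end

theorem Fin.val_lt_sub_one_iff_ne {n : ℕ} {m l : Fin n} (hm : (m : ℕ) = n - 1) :
    (l : ℕ) < n - 1 ↔ l ≠ m := by
  rw [Ne, Fin.ext_iff]
  omega

theorem mem_hessSpace_iff {n : ℕ} {h : Fin n → ℕ} {m : Fin n} (hm : (m : ℕ) = n - 1)
    (hh : ∀ k : Fin n, h k = if (k : ℕ) < n - 1 then n - 1 else n) (M : Matrix (Fin n) (Fin n) ℂ) :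
    M ∈ HessSpace h ↔ ∀ l, l ≠ m → M m l = 0 := by
  simp only [HessSpace, Set.mem_ofPred_eq, hh, Fin.val_lt_sub_one_iff_ne hm]
  constructor
  · intro H l hl
    exact H m l (by simp [hl, hm])
  · intro H k l hkl
    split_ifs at hkl with hl
    · obtain rfl : k = m := Fin.ext (by omega)
      exact H l hl
    · omega

/-- with `X = Σ_{k=1}^{n−1} E_{kk}` (the diagonal matrix with entries
`1,…,1,0`), `h(k) = n−1` for `k ≤ n−1` and `h(n) = n`, and `V_{n−1}` the span of the
first `n−1` columns of an invertible matrix `g`: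
`g⁻¹·X·g ∈ H_h` iff exactly one of (a) `e_n ∈ V_{n−1}`, (b) `V_{n−1} = span(e_1,…,e_{n−1})`
holds; moreover (a) and (b) are mutually exclusive. -/
theorem stmt16 (n : ℕ) (hn : 2 ≤ n)
    (X : Matrix (Fin n) (Fin n) ℂ)
    (hX : X = Matrix.diagonal (fun k : Fin n => if (k : ℕ) < n - 1 then (1 : ℂ) else 0))
    (h : Fin n → ℕ) (hh : ∀ k : Fin n, h k = if (k : ℕ) < n - 1 then n - 1 else n)
    (g : Matrix (Fin n) (Fin n) ℂ) (hg : IsUnit g)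
    (V : Submodule ℂ (Fin n → ℂ))
    (hV : V = Submodule.span ℂ
      {v : Fin n → ℂ | ∃ l : Fin n, (l : ℕ) < n - 1 ∧ v = fun k => g k l}) :
    (g⁻¹ * X * g ∈ HessSpace h ↔
      Xor' ((Pi.single (⟨n - 1, by omega⟩ : Fin n) 1 : Fin n → ℂ) ∈ V)
        (V = Submodule.span ℂ
          {v : Fin n → ℂ | ∃ l : Fin n, (l : ℕ) < n - 1 ∧ v = Pi.single l 1})) ∧
    ¬(((Pi.single (⟨n - 1, by omega⟩ : Fin n) 1 : Fin n → ℂ) ∈ V) ∧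
      V = Submodule.span ℂ
        {v : Fin n → ℂ | ∃ l : Fin n, (l : ℕ) < n - 1 ∧ v = Pi.single l 1}) := by
  set m : Fin n := ⟨n - 1, by omega⟩
  have hlt (l : Fin n) : (l : ℕ) < n - 1 ↔ l ≠ m := Fin.val_lt_sub_one_iff_ne rfl
  have hX' : X = 1 - single m m 1 := by
    rw [hX, ← diagonal_one, ← diagonal_single, diagonal_sub]
    congr 1 with k
    by_cases hk : k = m <;> simp [hlt, hk]
  simp_rw [hlt] at hV ⊢
  have hexcl :
      ¬(Pi.single m 1 ∈ V ∧ V = Submodule.span ℂ {v | ∃ l, l ≠ m ∧ v = Pi.single l 1}) := by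
    rintro ⟨hm, rfl⟩
    exact single_one_notMem_span_single_one_ne m hm
  refine ⟨?_, hexcl⟩
  rw [Xor', xor_iff_or_and_not_and, and_iff_left hexcl, hV, single_one_mem_span_col_ne_iff hg,
    span_col_ne_eq_span_single_one_ne_iff hg, mem_hessSpace_iff (m := m) rfl hh, hX']
  exact inv_mul_one_sub_single_mul_row_eq_zero_iff hg m
end
end
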